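/- arXiv:1803.04315 — 5 statements merged into one kernel-verified Lean document; each statement's English description precedes it below -/
import Mathlib

section
/- Let X, Y be independent square-integrable random vectors in ℝ^d, c₁ = ‖E[X]−E[Y]‖², c_X and c_Y the traces of their covariances (c_X = E[‖X−E[X]‖²], c_Y = E[‖Y−E[Y]‖²]), with c₁ > 0. For every p ∈ [c_Y, c_Y + c₁], the minimum over u ∈ ℝ^d of E[‖X−u‖²] subject to E[‖Y−u‖²] ≤ p equals c_X + (√c₁ − √(p − c_Y))². -/
open MeasureTheory ProbabilityTheory Metric

/-! By the bias–variance decomposition `E‖X - u‖² = c_X + ‖u - E X‖²`, the problem is to minimise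
`dist u (E X)²` over the closed ball of radius `√(p - c_Y) ≤ dist (E X) (E Y)` around `E Y`.
The triangle inequality bounds this below by `(√c₁ - √(p - c_Y))²`, and the point of the ball on
the segment from `E Y` to `E X` attains the bound. -/

theorem integral_norm_sub_sq_eq {Ω E : Type*} [MeasurableSpace Ω] {μ : Measure Ω}
    [IsProbabilityMeasure μ] [NormedAddCommGroup E] [InnerProductSpace ℝ E] [CompleteSpace E]
    {X : Ω → E} (hX : MemLp X 2 μ) (u : E) :
    ∫ ω, ‖X ω - u‖ ^ 2 ∂μ =
      (∫ ω, ‖X ω - ∫ ω', X ω' ∂μ‖ ^ 2 ∂μ) + ‖u - ∫ ω', X ω' ∂μ‖ ^ 2 := by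
  set m := ∫ ω', X ω' ∂μ
  have hXc : Integrable (fun ω => X ω - m) μ :=
    (hX.integrable one_le_two).sub (integrable_const m)
  have hsq : Integrable (fun ω => ‖X ω - m‖ ^ 2) μ :=
    (hX.sub (memLp_const m)).integrable_norm_pow two_ne_zero
  have hcross : Integrable (fun ω => 2 * inner ℝ (m - u) (X ω - m)) μ :=
    (hXc.const_inner _).const_mul 2
  have hcentered : ∫ ω, (X ω - m) ∂μ = 0 := by
    rw [integral_sub (hX.integrable one_le_two) (integrable_const m)]
    simp [m]
  have hpointwise : ∀ ω, ‖X ω - u‖ ^ 2 =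
      ‖X ω - m‖ ^ 2 + 2 * inner ℝ (m - u) (X ω - m) + ‖m - u‖ ^ 2 := fun ω => by
    rw [← sub_add_sub_cancel (X ω) m u, norm_add_sq_real, real_inner_comm]
  have hsum : Integrable (fun ω => ‖X ω - m‖ ^ 2 + 2 * inner ℝ (m - u) (X ω - m)) μ :=
    hsq.add hcross
  simp_rw [hpointwise]
  rw [integral_add hsum (integrable_const _), integral_add hsq hcross,
    integral_const_mul, integral_inner hXc, hcentered]
  simp [norm_sub_rev]

theorem isLeast_sq_dist_image_closedBall {E : Type*} [NormedAddCommGroup E] [NormedSpace ℝ E]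
    {a b : E} {r : ℝ} (hr : 0 ≤ r) (hrab : r ≤ dist a b) :
    IsLeast ((fun u => dist u a ^ 2) '' closedBall b r) ((dist a b - r) ^ 2) := by
  refine ⟨?_, ?_⟩
  · obtain hab | hab := (dist_nonneg : 0 ≤ dist a b).eq_or_lt
    · obtain rfl : r = 0 := by linarith
      obtain rfl := dist_eq_zero.1 hab.symm
      exact ⟨a, mem_closedBall_self le_rfl, by simp⟩
    refine ⟨AffineMap.lineMap b a (r / dist a b), ?_, ?_⟩
    · rw [mem_closedBall, dist_lineMap_left, Real.norm_of_nonneg (by positivity), dist_comm b,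
        div_mul_cancel₀ _ hab.ne']
    · have ht : r / dist a b ≤ 1 := div_le_one_of_le₀ hrab hab.le
      dsimp only
      rw [dist_lineMap_right, Real.norm_of_nonneg (sub_nonneg.2 ht), dist_comm b]
      field_simp
  · rintro _ ⟨u, hu, rfl⟩
    have : dist a b - r ≤ dist u a := by
      linarith [dist_triangle a u b, dist_comm a u, mem_closedBall.1 hu]
    exact pow_le_pow_left₀ (by linarith) this 2

theorem stmt_3_general (d : ℕ) (Ω : Type*) [MeasureSpace Ω]
    [IsProbabilityMeasure (ℙ : Measure Ω)]
    (X Y : Ω → EuclideanSpace ℝ (Fin d))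
    (hX : MemLp X 2 ℙ) (hY : MemLp Y 2 ℙ)
    (c₁ cX cY : ℝ)
    (hc₁ : c₁ = ‖(∫ ω, X ω) - (∫ ω, Y ω)‖ ^ 2)
    (hcX : cX = ∫ ω, ‖X ω - (∫ ω', X ω')‖ ^ 2)
    (hcY : cY = ∫ ω, ‖Y ω - (∫ ω', Y ω')‖ ^ 2)
    (p : ℝ) (hp : p ∈ Set.Icc cY (cY + c₁)) :
    IsLeast {v : ℝ | ∃ u : EuclideanSpace ℝ (Fin d),
        (∫ ω, ‖Y ω - u‖ ^ 2) ≤ p ∧ v = ∫ ω, ‖X ω - u‖ ^ 2}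
      (cX + (Real.sqrt c₁ - Real.sqrt (p - cY)) ^ 2) := by
  set mX := ∫ ω, X ω
  set mY := ∫ ω, Y ω
  have hsqrt_c₁ : Real.sqrt c₁ = dist mX mY := by
    rw [hc₁, Real.sqrt_sq (norm_nonneg _), dist_eq_norm]
  have hr : Real.sqrt (p - cY) ≤ dist mX mY := by
    rw [← hsqrt_c₁]; exact Real.sqrt_le_sqrt (by linarith [hp.2])
  have hset : {v : ℝ | ∃ u, (∫ ω, ‖Y ω - u‖ ^ 2) ≤ p ∧ v = ∫ ω, ‖X ω - u‖ ^ 2} =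
      (cX + ·) '' ((fun u => dist u mX ^ 2) '' closedBall mY (Real.sqrt (p - cY))) := by
    ext v
    simp only [Set.image_image, Set.mem_image, mem_closedBall]
    refine exists_congr fun u => ?_
    rw [integral_norm_sub_sq_eq hX, integral_norm_sub_sq_eq hY, ← hcX, ← hcY, dist_eq_norm,
      dist_eq_norm, Real.le_sqrt (norm_nonneg _) (sub_nonneg.2 hp.1), le_sub_iff_add_le', eq_comm]
  rw [hset, hsqrt_c₁]
  exact (monotone_id.const_add cX).map_isLeast
    (isLeast_sq_dist_image_closedBall (Real.sqrt_nonneg _) hr)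

theorem stmt_3 (d : ℕ) (Ω : Type*) [MeasureSpace Ω]
    [IsProbabilityMeasure (ℙ : Measure Ω)]
    (X Y : Ω → EuclideanSpace ℝ (Fin d))
    (hXY : IndepFun X Y ℙ)
    (hX : MemLp X 2 ℙ) (hY : MemLp Y 2 ℙ)
    (c₁ cX cY : ℝ)
    (hc₁ : c₁ = ‖(∫ ω, X ω) - (∫ ω, Y ω)‖ ^ 2)
    (hcX : cX = ∫ ω, ‖X ω - (∫ ω', X ω')‖ ^ 2)
    (hcY : cY = ∫ ω, ‖Y ω - (∫ ω', Y ω')‖ ^ 2)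
    (hc₁pos : 0 < c₁)
    (p : ℝ) (hp : p ∈ Set.Icc cY (cY + c₁)) :
    IsLeast {v : ℝ | ∃ u : EuclideanSpace ℝ (Fin d),
        (∫ ω, ‖Y ω - u‖ ^ 2) ≤ p ∧ v = ∫ ω, ‖X ω - u‖ ^ 2}
      (cX + (Real.sqrt c₁ - Real.sqrt (p - cY)) ^ 2) :=
  stmt_3_general d Ω X Y hX hY c₁ cX cY hc₁ hcX hcY p hp
end

section
/- For any c₂ > 0 and c_Y ≥ 0, the distributed tradeoff p ↦ (√c₂ − √(p − c_Y))² on [c_Y, c_Y + c₂] dominates (is greater than or equal to) the centralized tradeoff p ↦ (√(c₂ + c_Y) − √p)² on the common domain [c_Y, c_Y + c₂], with equality at the endpoint p = c_Y + c₂ and strict inequality for p ∈ (c_Y, c_Y + c₂) when c_Y > 0. -/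
/-!
Writing `a = √(c₂ + c_Y)`, `b = √p`, `c = √c₂`, `d = √(p - c_Y)`, we have `a² + b² = c² + d² + 2 c_Y`,
so the claim is equivalent to `c d + c_Y ≤ a b`. Squaring, this is
`(c d + c_Y)² ≤ (c² + c_Y)(d² + c_Y)`, whose gap is `c_Y (c - d)²`: a Cauchy–Schwarz inequality,
strict exactly when `c_Y > 0` and `c ≠ d`.
-/

namespace Real

variable {x u y : ℝ}

theorem two_mul_sqrt_mul_sqrt_le_add (hx : 0 ≤ x) (hu : 0 ≤ u) : 2 * (√x * √u) ≤ x + u := by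
  nlinarith [sq_nonneg (√x - √u), sq_sqrt hx, sq_sqrt hu]

theorem two_mul_sqrt_mul_sqrt_lt_add (hx : 0 ≤ x) (hu : 0 ≤ u) (hxu : x ≠ u) :
    2 * (√x * √u) < x + u := by
  have hne : √x - √u ≠ 0 := sub_ne_zero.2 fun h => hxu ((sqrt_inj hx hu).1 h)
  nlinarith [sq_pos_of_ne_zero hne, sq_sqrt hx, sq_sqrt hu]

theorem sqrt_mul_sqrt_add_le (hx : 0 ≤ x) (hu : 0 ≤ u) (hy : 0 ≤ y) :
    √x * √u + y ≤ √(x + y) * √(u + y) := by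
  rw [← sqrt_mul (by linarith) (u + y)]
  refine le_sqrt_of_sq_le ?_
  calc (√x * √u + y) ^ 2 = (√x) ^ 2 * (√u) ^ 2 + y * (2 * (√x * √u)) + y ^ 2 := by ring
    _ ≤ x * u + y * (x + u) + y ^ 2 := by
      rw [sq_sqrt hx, sq_sqrt hu]
      gcongr
      exact two_mul_sqrt_mul_sqrt_le_add hx hu
    _ = (x + y) * (u + y) := by ring

theorem sqrt_mul_sqrt_add_lt (hx : 0 ≤ x) (hu : 0 ≤ u) (hy : 0 < y) (hxu : x ≠ u) :
    √x * √u + y < √(x + y) * √(u + y) := by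
  rw [← sqrt_mul (by linarith) (u + y)]
  refine (lt_sqrt (by positivity)).2 ?_
  calc (√x * √u + y) ^ 2 = (√x) ^ 2 * (√u) ^ 2 + y * (2 * (√x * √u)) + y ^ 2 := by ring
    _ < x * u + y * (x + u) + y ^ 2 := by
      rw [sq_sqrt hx, sq_sqrt hu]
      gcongr
      exact two_mul_sqrt_mul_sqrt_lt_add hx hu hxu
    _ = (x + y) * (u + y) := by ring

theorem sq_sqrt_add_sub_sqrt_add_eq (hx : 0 ≤ x) (hu : 0 ≤ u) (hy : 0 ≤ y) :
    (√(x + y) - √(u + y)) ^ 2 = (√x - √u) ^ 2 + 2 * (√x * √u + y - √(x + y) * √(u + y)) := by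
  have hxy : 0 ≤ x + y := by linarith
  have huy : 0 ≤ u + y := by linarith
  linear_combination sq_sqrt hxy + sq_sqrt huy - sq_sqrt hx - sq_sqrt hu

theorem sq_sqrt_add_sub_sqrt_add_le (hx : 0 ≤ x) (hu : 0 ≤ u) (hy : 0 ≤ y) :
    (√(x + y) - √(u + y)) ^ 2 ≤ (√x - √u) ^ 2 := by
  rw [sq_sqrt_add_sub_sqrt_add_eq hx hu hy]
  linarith [sqrt_mul_sqrt_add_le hx hu hy]

theorem sq_sqrt_add_sub_sqrt_add_lt (hx : 0 ≤ x) (hu : 0 ≤ u) (hy : 0 < y) (hxu : x ≠ u) :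
    (√(x + y) - √(u + y)) ^ 2 < (√x - √u) ^ 2 := by
  rw [sq_sqrt_add_sub_sqrt_add_eq hx hu hy.le]
  linarith [sqrt_mul_sqrt_add_lt hx hu hy hxu]

end Real

theorem stmt_13_general (c₂ cY : ℝ) (hcY : 0 ≤ cY) :
    (∀ p ∈ Set.Icc cY (cY + c₂),
      (Real.sqrt (c₂ + cY) - Real.sqrt p) ^ 2
        ≤ (Real.sqrt c₂ - Real.sqrt (p - cY)) ^ 2) ∧
    ((Real.sqrt (c₂ + cY) - Real.sqrt (cY + c₂)) ^ 2
      = (Real.sqrt c₂ - Real.sqrt ((cY + c₂) - cY)) ^ 2) ∧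
    (0 < cY → ∀ p ∈ Set.Ioo cY (cY + c₂),
      (Real.sqrt (c₂ + cY) - Real.sqrt p) ^ 2
        < (Real.sqrt c₂ - Real.sqrt (p - cY)) ^ 2) := by
  refine ⟨fun p ⟨hp₁, hp₂⟩ => ?_, by simp [add_comm cY c₂], fun hcY' p ⟨hp₁, hp₂⟩ => ?_⟩
  · simpa using Real.sq_sqrt_add_sub_sqrt_add_le (x := c₂) (u := p - cY) (by linarith) (by linarith) hcY
  · simpa using Real.sq_sqrt_add_sub_sqrt_add_lt (x := c₂) (u := p - cY) (by linarith) (by linarith) hcY'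
      (by linarith : p - cY < c₂).ne'

theorem stmt_13 (c₂ cY : ℝ) (hc₂ : 0 < c₂) (hcY : 0 ≤ cY) :
    (∀ p ∈ Set.Icc cY (cY + c₂),
      (Real.sqrt (c₂ + cY) - Real.sqrt p) ^ 2
        ≤ (Real.sqrt c₂ - Real.sqrt (p - cY)) ^ 2) ∧
    ((Real.sqrt (c₂ + cY) - Real.sqrt (cY + c₂)) ^ 2
      = (Real.sqrt c₂ - Real.sqrt ((cY + c₂) - cY)) ^ 2) ∧
    (0 < cY → ∀ p ∈ Set.Ioo cY (cY + c₂),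
      (Real.sqrt (c₂ + cY) - Real.sqrt p) ^ 2
        < (Real.sqrt c₂ - Real.sqrt (p - cY)) ^ 2) :=
  stmt_13_general c₂ cY hcY
end

section
/- For X uniform on [0,1], the minimum over n real points u₁,...,uₙ of E[min_i (X−u_i)²] equals 1/(12n²), achieved by the equispaced points u_i = (2i−1)/(2n). -/
open MeasureTheory ProbabilityTheory Set

/-!
Write `g x = min_i (x - u_i)²`. The sublevel set `{g ≤ t}` is covered by the `n` intervals of
length `2√t` centred at the `u_i`, so on `[0,1]` the superlevel set `{g > t}` has measure at least
`1 - 2n√t`, and the layer-cake formula gives `∫ g ≥ ∫₀^{1/(4n²)} (1 - 2n√t) dt = 1/(12n²)`.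
For the equispaced points, on the cell `[k/n, (k+1)/n]` one bounds `g` by the squared distance
to its midpoint, which integrates to `1/(12n³)`.
-/

section NearestPoint

variable {ι : Type*} (u : ι → ℝ)

theorem iInf_sq_sub_nonneg (x : ℝ) : 0 ≤ ⨅ i, (x - u i) ^ 2 :=
  Real.iInf_nonneg fun _ => sq_nonneg _

theorem iInf_sq_sub_le (x : ℝ) (i : ι) : ⨅ j, (x - u j) ^ 2 ≤ (x - u i) ^ 2 :=
  ciInf_le ⟨0, by rintro _ ⟨j, rfl⟩; exact sq_nonneg _⟩ i

variable [Fintype ι] [Nonempty ι]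

theorem continuous_iInf_sq_sub : Continuous fun x : ℝ => ⨅ i, (x - u i) ^ 2 := by
  simp only [← Finset.inf'_univ_eq_ciInf]
  exact Continuous.finset_inf'_apply _ fun i _ => by fun_prop

theorem volume_setOf_iInf_sq_sub_le (t : ℝ) :
    volume {x | ⨅ i, (x - u i) ^ 2 ≤ t} ≤ ENNReal.ofReal (2 * Fintype.card ι * √t) := by
  have cover : {x | ⨅ i, (x - u i) ^ 2 ≤ t} ⊆ ⋃ i, Icc (u i - √t) (u i + √t) := by
    intro x hx
    obtain ⟨i, hi⟩ := exists_eq_ciInf_of_finite (f := fun i => (x - u i) ^ 2)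
    have := abs_le.1 (Real.abs_le_sqrt (hi.trans_le hx))
    exact mem_iUnion.2 ⟨i, by constructor <;> linarith⟩
  calc volume {x | ⨅ i, (x - u i) ^ 2 ≤ t}
      ≤ ∑ i, volume (Icc (u i - √t) (u i + √t)) :=
        (measure_mono cover).trans (measure_iUnion_fintype_le _ _)
    _ = ENNReal.ofReal (2 * Fintype.card ι * √t) := by
        simp only [Real.volume_Icc, add_sub_sub_cancel, Finset.sum_const, Finset.card_univ,
          nsmul_eq_mul]
        rw [← ENNReal.ofReal_natCast, ← ENNReal.ofReal_mul (by positivity)]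
        ring_nf

theorem ofReal_one_sub_le_volume_Icc_lt_iInf_sq_sub (t : ℝ) :
    ENNReal.ofReal (1 - 2 * Fintype.card ι * √t)
      ≤ volume.restrict (Icc (0 : ℝ) 1) {x | t < ⨅ i, (x - u i) ^ 2} := by
  have hmeas : MeasurableSet {x : ℝ | ⨅ i, (x - u i) ^ 2 ≤ t} :=
    measurableSet_le (continuous_iInf_sq_sub u).measurable measurable_const
  have hcompl : {x : ℝ | t < ⨅ i, (x - u i) ^ 2} = {x | ⨅ i, (x - u i) ^ 2 ≤ t}ᶜ := by
    ext; simp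
  rw [hcompl, measure_compl hmeas (measure_ne_top _ _), Measure.restrict_apply_univ,
    Real.volume_Icc, ENNReal.ofReal_sub _ (by positivity), sub_zero, ENNReal.ofReal_one]
  exact tsub_le_tsub_left
    ((Measure.restrict_le_self _).trans (volume_setOf_iInf_sq_sub_le u t)) 1

end NearestPoint

theorem integral_sqrt_of_nonneg {b : ℝ} (hb : 0 ≤ b) :
    ∫ t in (0 : ℝ)..b, √t = 2 / 3 * b * √b := by
  simp only [Real.sqrt_eq_rpow]
  rw [integral_rpow (Or.inl (by norm_num)), Real.zero_rpow (by norm_num),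
    Real.rpow_add' hb (by norm_num), Real.rpow_one]
  ring

theorem integral_one_sub_mul_sqrt {c : ℝ} (hc : 0 < c) :
    ∫ t in (0 : ℝ)..(c ^ 2)⁻¹, (1 - c * √t) = (3 * c ^ 2)⁻¹ := by
  rw [intervalIntegral.integral_sub intervalIntegrable_const
      (Real.continuous_sqrt.intervalIntegrable _ _ |>.const_mul c),
    intervalIntegral.integral_const, intervalIntegral.integral_const_mul,
    integral_sqrt_of_nonneg (by positivity), Real.sqrt_inv, Real.sqrt_sq hc.le, sub_zero,
    smul_eq_mul, mul_one]
  field_simp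
  ring

theorem one_sub_mul_sqrt_nonneg {c t : ℝ} (hc : 0 < c) (ht : t ≤ (c ^ 2)⁻¹) :
    0 ≤ 1 - c * √t := by
  have : c * √t ≤ c * c⁻¹ := by
    gcongr
    rw [← Real.sqrt_sq hc.le, ← Real.sqrt_inv]
    exact Real.sqrt_le_sqrt ht
  rw [mul_inv_cancel₀ hc.ne'] at this
  linarith

theorem one_div_twelve_mul_card_sq_le_integral_iInf_sq_sub {ι : Type*} [Fintype ι] [Nonempty ι]
    (u : ι → ℝ) :
    1 / (12 * (Fintype.card ι : ℝ) ^ 2) ≤ ∫ x in Icc (0 : ℝ) 1, ⨅ i, (x - u i) ^ 2 := by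
  set μ := volume.restrict (Icc (0 : ℝ) 1)
  set c : ℝ := 2 * Fintype.card ι
  have hc : 0 < c := by positivity
  have hg := continuous_iInf_sq_sub u
  have hg0 : 0 ≤ᵐ[μ] fun x => ⨅ i, (x - u i) ^ 2 := .of_forall (iInf_sq_sub_nonneg u)
  have tail_integrable : IntegrableOn (fun t => 1 - c * √t) (Ioc 0 (c ^ 2)⁻¹) :=
    (by fun_prop : Continuous fun t => 1 - c * √t).integrableOn_Icc.mono_set Ioc_subset_Icc_self
  have tail_nonneg : 0 ≤ᵐ[volume.restrict (Ioc 0 (c ^ 2)⁻¹)] fun t => 1 - c * √t :=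
    (ae_restrict_iff' measurableSet_Ioc).2
      (.of_forall fun t ht => one_sub_mul_sqrt_nonneg hc ht.2)
  rw [← ENNReal.ofReal_le_ofReal_iff (integral_nonneg (iInf_sq_sub_nonneg u)),
    ofReal_integral_eq_lintegral_ofReal hg.integrableOn_Icc hg0,
    lintegral_eq_lintegral_meas_lt μ hg0 hg.measurable.aemeasurable]
  calc ENNReal.ofReal (1 / (12 * (Fintype.card ι : ℝ) ^ 2))
      = ENNReal.ofReal (∫ t in Ioc 0 (c ^ 2)⁻¹, (1 - c * √t)) := by
        rw [← intervalIntegral.integral_of_le (by positivity), integral_one_sub_mul_sqrt hc]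
        simp only [c]
        ring_nf
    _ = ∫⁻ t in Ioc 0 (c ^ 2)⁻¹, ENNReal.ofReal (1 - c * √t) :=
        ofReal_integral_eq_lintegral_ofReal tail_integrable tail_nonneg
    _ ≤ ∫⁻ t in Ioc 0 (c ^ 2)⁻¹, μ {x | t < ⨅ i, (x - u i) ^ 2} :=
        lintegral_mono fun t => ofReal_one_sub_le_volume_Icc_lt_iInf_sq_sub u t
    _ ≤ ∫⁻ t in Ioi 0, μ {x | t < ⨅ i, (x - u i) ^ 2} := lintegral_mono_set Ioc_subset_Ioi_self

theorem integral_sq_sub_center (m h : ℝ) :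
    ∫ x in (m - h)..(m + h), (x - m) ^ 2 = 2 * h ^ 3 / 3 := by
  rw [intervalIntegral.integral_comp_sub_right (fun x => x ^ 2), integral_pow]
  ring

theorem integral_iInf_sq_sub_midpoints_le (n : ℕ) [NeZero n] :
    ∫ x in Icc (0 : ℝ) 1, ⨅ i : Fin n, (x - (2 * (i : ℝ) + 1) / (2 * n)) ^ 2
      ≤ 1 / (12 * (n : ℝ) ^ 2) := by
  set u : Fin n → ℝ := fun i => (2 * (i : ℝ) + 1) / (2 * n)
  have hn : (n : ℝ) ≠ 0 := NeZero.ne _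
  have hg := continuous_iInf_sq_sub u
  have cell (k : Fin n) :
      ∫ x in (k / n : ℝ)..((k + 1) / n), ⨅ i, (x - u i) ^ 2 ≤ 1 / (12 * (n : ℝ) ^ 3) := by
    have left : (k / n : ℝ) = u k - 1 / (2 * n) := by simp only [u]; field_simp; ring
    have right : ((k + 1) / n : ℝ) = u k + 1 / (2 * n) := by simp only [u]; field_simp; ring
    calc ∫ x in (k / n : ℝ)..((k + 1) / n), ⨅ i, (x - u i) ^ 2
        ≤ ∫ x in (k / n : ℝ)..((k + 1) / n), (x - u k) ^ 2 :=
          intervalIntegral.integral_mono_on (by gcongr; linarith) (hg.intervalIntegrable _ _)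
            ((by fun_prop : Continuous fun x : ℝ => (x - u k) ^ 2).intervalIntegrable _ _)
            fun x _ => iInf_sq_sub_le u x k
      _ = 1 / (12 * (n : ℝ) ^ 3) := by
          rw [left, right, integral_sq_sub_center]
          field_simp
          ring
  calc ∫ x in Icc (0 : ℝ) 1, ⨅ i, (x - u i) ^ 2
      = ∫ x in (0 : ℝ)..1, ⨅ i, (x - u i) ^ 2 := by
        rw [intervalIntegral.integral_of_le zero_le_one, integral_Icc_eq_integral_Ioc]
    _ = ∑ k ∈ Finset.range n, ∫ x in (k / n : ℝ)..((k + 1) / n), ⨅ i, (x - u i) ^ 2 := by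
        have := intervalIntegral.sum_integral_adjacent_intervals (μ := volume)
          (a := fun k : ℕ => (k / n : ℝ)) (n := n) (fun k _ => hg.intervalIntegrable _ _)
        push_cast at this
        rw [this, zero_div, div_self hn]
    _ = ∑ k : Fin n, ∫ x in (k / n : ℝ)..((k + 1) / n), ⨅ i, (x - u i) ^ 2 :=
        (Fin.sum_univ_eq_sum_range _ n).symm
    _ ≤ ∑ _k : Fin n, 1 / (12 * (n : ℝ) ^ 3) := Finset.sum_le_sum fun k _ => cell k
    _ = 1 / (12 * (n : ℝ) ^ 2) := by
        rw [Finset.sum_const, Finset.card_univ, Fintype.card_fin, nsmul_eq_mul]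
        field_simp

theorem stmt_15_general (Ω : Type*) [MeasureSpace Ω]
    (X : Ω → ℝ) (hXmeas : Measurable X)
    (hXunif : Measure.map X ℙ = volume.restrict (Set.Icc (0 : ℝ) 1))
    (n : ℕ) (hn : 1 ≤ n) :
    IsLeast {v : ℝ | ∃ u : Fin n → ℝ, v = ∫ ω, ⨅ i, (X ω - u i) ^ 2}
        (1 / (12 * (n : ℝ) ^ 2)) ∧
    (∫ ω, ⨅ i : Fin n, (X ω - (2 * (i : ℝ) + 1) / (2 * n)) ^ 2)
      = 1 / (12 * (n : ℝ) ^ 2) := by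
  have : NeZero n := ⟨by omega⟩
  have law (u : Fin n → ℝ) :
      ∫ ω, ⨅ i, (X ω - u i) ^ 2 = ∫ x in Icc (0 : ℝ) 1, ⨅ i, (x - u i) ^ 2 := by
    rw [← hXunif,
      integral_map hXmeas.aemeasurable (continuous_iInf_sq_sub u).aestronglyMeasurable]
  have lower (u : Fin n → ℝ) : 1 / (12 * (n : ℝ) ^ 2) ≤ ∫ ω, ⨅ i, (X ω - u i) ^ 2 := by
    simpa [law] using one_div_twelve_mul_card_sq_le_integral_iInf_sq_sub u
  have midpoints :
      ∫ ω, ⨅ i : Fin n, (X ω - (2 * (i : ℝ) + 1) / (2 * n)) ^ 2 = 1 / (12 * (n : ℝ) ^ 2) :=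
    le_antisymm (by rw [law]; exact integral_iInf_sq_sub_midpoints_le n) (lower _)
  exact ⟨⟨⟨_, midpoints.symm⟩, by rintro v ⟨u, rfl⟩; exact lower u⟩, midpoints⟩

theorem stmt_15 (Ω : Type*) [MeasureSpace Ω]
    [IsProbabilityMeasure (ℙ : Measure Ω)]
    (X : Ω → ℝ) (hXmeas : Measurable X)
    (hXunif : Measure.map X ℙ = volume.restrict (Set.Icc (0 : ℝ) 1))
    (n : ℕ) (hn : 1 ≤ n) :
    IsLeast {v : ℝ | ∃ u : Fin n → ℝ, v = ∫ ω, ⨅ i, (X ω - u i) ^ 2}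
        (1 / (12 * (n : ℝ) ^ 2)) ∧
    (∫ ω, ⨅ i : Fin n, (X ω - (2 * (i : ℝ) + 1) / (2 * n)) ^ 2)
      = 1 / (12 * (n : ℝ) ^ 2) :=
  stmt_15_general Ω X hXmeas hXunif n hn
end

section
/- Let X, Y be independent square-integrable random vectors in ℝ^d and λ ≥ 0. For any finite set of points u₁,...,uₙ ∈ ℝ^d, E[min_i (‖X−u_i‖² + λ‖Y−u_i‖²)] = λE[‖X−Y‖²]/(1+λ) + (1+λ)·E[min_i ‖u_i − Z‖²], where Z = (X+λY)/(1+λ). -/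
/-!
Expanding the squares, `‖x - v‖² + λ‖y - v‖²` splits as `λ‖x - y‖²/(1 + λ)`, which does not
depend on `v`, plus `(1 + λ)‖v - z‖²` with `z = (x + λy)/(1 + λ)`. The affine map
`t ↦ c + (1 + λ)t` is monotone, so it commutes with a finite minimum over `v = uᵢ`, and the claim
follows by integrating this pointwise identity.
-/

open MeasureTheory ProbabilityTheory RealInnerProductSpace

theorem norm_sub_sq_add_mul_norm_sub_sq {E : Type*} [NormedAddCommGroup E]
    [InnerProductSpace ℝ E] {l : ℝ} (hl : 1 + l ≠ 0) (x y v : E) :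
    ‖x - v‖ ^ 2 + l * ‖y - v‖ ^ 2
      = l * ‖x - y‖ ^ 2 / (1 + l) + (1 + l) * ‖v - (1 / (1 + l)) • (x + l • y)‖ ^ 2 := by
  simp only [← real_inner_self_eq_norm_sq, inner_sub_left, inner_sub_right, inner_add_left,
    inner_add_right, real_inner_smul_left, real_inner_smul_right, real_inner_comm y x,
    real_inner_comm v x, real_inner_comm v y]
  field_simp
  ring

theorem ciInf_const_add_mul_of_nonneg {ι : Type*} [Finite ι] [Nonempty ι] (c : ℝ) {K : ℝ}
    (hK : 0 ≤ K) (f : ι → ℝ) : ⨅ i, (c + K * f i) = c + K * ⨅ i, f i := by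
  have hmono : Monotone fun t : ℝ => c + K * t := fun _ _ h => by
    dsimp only
    gcongr
  exact (hmono.map_ciInf_of_continuousAt (by fun_prop) (Set.finite_range f).bddBelow).symm

theorem iInf_norm_sub_sq_add_mul_norm_sub_sq {E ι : Type*} [NormedAddCommGroup E]
    [InnerProductSpace ℝ E] [Finite ι] [Nonempty ι] {l : ℝ} (hl : 0 ≤ l) (x y : E)
    (u : ι → E) :
    ⨅ i, (‖x - u i‖ ^ 2 + l * ‖y - u i‖ ^ 2)
      = l * ‖x - y‖ ^ 2 / (1 + l) + (1 + l) * ⨅ i, ‖u i - (1 / (1 + l)) • (x + l • y)‖ ^ 2 := by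
  simp only [norm_sub_sq_add_mul_norm_sub_sq (by positivity : 1 + l ≠ 0) x y]
  exact ciInf_const_add_mul_of_nonneg _ (by positivity) _

theorem MeasureTheory.Integrable.ciInf {α ι : Type*} [MeasurableSpace α] {μ : Measure α}
    [Fintype ι] [Nonempty ι] {f : ι → α → ℝ} (hf : ∀ i, Integrable (f i) μ) :
    Integrable (fun a => ⨅ i, f i a) μ := by
  have hinf : (fun a => ⨅ i, f i a) = Finset.univ.inf' Finset.univ_nonempty f := by
    ext a
    rw [Finset.inf'_apply, Finset.inf'_univ_eq_ciInf]
  rw [hinf]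
  exact Finset.inf'_induction _ _ (p := (Integrable · μ)) (fun _ h₁ _ h₂ => h₁.inf h₂)
    fun i _ => hf i

theorem stmt_18_general (d : ℕ) (Ω : Type*) [MeasureSpace Ω]
    [IsProbabilityMeasure (ℙ : Measure Ω)]
    (X Y : Ω → EuclideanSpace ℝ (Fin d))
    (hX : MemLp X 2 ℙ) (hY : MemLp Y 2 ℙ)
    (l : ℝ) (hl : 0 ≤ l)
    (n : ℕ) (hn : 1 ≤ n) (u : Fin n → EuclideanSpace ℝ (Fin d))
    (Z : Ω → EuclideanSpace ℝ (Fin d))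
    (hZ : ∀ ω, Z ω = (1 / (1 + l)) • (X ω + l • Y ω)) :
    (∫ ω, ⨅ i, (‖X ω - u i‖ ^ 2 + l * ‖Y ω - u i‖ ^ 2))
      = l * (∫ ω, ‖X ω - Y ω‖ ^ 2) / (1 + l)
        + (1 + l) * (∫ ω, ⨅ i, ‖u i - Z ω‖ ^ 2) := by
  have : Nonempty (Fin n) := ⟨⟨0, hn⟩⟩
  have hZ' : Z = fun ω => (1 / (1 + l)) • (X ω + l • Y ω) := funext hZ
  have hZmem : MemLp Z 2 ℙ := hZ' ▸ (hX.add (hY.const_smul l)).const_smul (1 / (1 + l))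
  have hXY : Integrable (fun ω => ‖X ω - Y ω‖ ^ 2) ℙ := (hX.sub hY).integrable_norm_pow'
  have hquant : Integrable (fun ω => ⨅ i, ‖u i - Z ω‖ ^ 2) ℙ :=
    Integrable.ciInf fun i => ((memLp_const (u i)).sub hZmem).integrable_norm_pow'
  simp only [iInf_norm_sub_sq_add_mul_norm_sub_sq hl, ← hZ]
  rw [integral_add ((hXY.const_mul l).div_const (1 + l)) (hquant.const_mul (1 + l)),
    integral_div, integral_const_mul, integral_const_mul]

theorem stmt_18 (d : ℕ) (Ω : Type*) [MeasureSpace Ω]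
    [IsProbabilityMeasure (ℙ : Measure Ω)]
    (X Y : Ω → EuclideanSpace ℝ (Fin d))
    (hXY : IndepFun X Y ℙ)
    (hX : MemLp X 2 ℙ) (hY : MemLp Y 2 ℙ)
    (l : ℝ) (hl : 0 ≤ l)
    (n : ℕ) (hn : 1 ≤ n) (u : Fin n → EuclideanSpace ℝ (Fin d))
    (Z : Ω → EuclideanSpace ℝ (Fin d))
    (hZ : ∀ ω, Z ω = (1 / (1 + l)) • (X ω + l • Y ω)) :
    (∫ ω, ⨅ i, (‖X ω - u i‖ ^ 2 + l * ‖Y ω - u i‖ ^ 2))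
      = l * (∫ ω, ‖X ω - Y ω‖ ^ 2) / (1 + l)
        + (1 + l) * (∫ ω, ⨅ i, ‖u i - Z ω‖ ^ 2) :=
  stmt_18_general d Ω X Y hX hY l hl n hn u Z hZ
end

section
/- Let X, Y be independent square-integrable random variables and λ ≥ 0. For points u₁,...,uₙ ∈ ℝ, E[min_i ((X−u_i)² + λE[(Y−u_i)²])] = (λE[(X−Y)²] + λ²Var(Y))/(1+λ) + (1+λ)E[min_i (u_i − W)²], where W = (X+λE[Y])/(1+λ) and the inner expectation over Y is taken before the minimum. -/
/-!
For every centre `u`, `E_Y[(Y - u)²] = Var Y + (E Y - u)²`, and completing the square around the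
weighted mean `W = (X + λ E Y) / (1 + λ)` gives
`(X - u)² + λ E_Y[(Y - u)²] = (1 + λ) (u - W)² + λ / (1 + λ) (X - E Y)² + λ Var Y`.
The last two terms do not depend on `u`, so they pass through the minimum over the centres
(a positive affine map commutes with `⨅`). Taking expectations, independence gives
`E[(X - Y)²] = E[(X - E Y)²] + Var Y`, which turns the constant into the stated one.
-/

open MeasureTheory ProbabilityTheory

section Moments

variable {Ω : Type*} {mΩ : MeasurableSpace Ω} {μ : Measure Ω} [IsProbabilityMeasure μ]
  {X Y : Ω → ℝ}

lemma integral_sq_eq_variance_add_sq (hX : MemLp X 2 μ) :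
    ∫ ω, X ω ^ 2 ∂μ = Var[X; μ] + μ[X] ^ 2 := by
  rw [variance_eq_sub hX]
  simp

lemma integral_sub_const_sq (hX : MemLp X 2 μ) (c : ℝ) :
    ∫ ω, (X ω - c) ^ 2 ∂μ = Var[X; μ] + (μ[X] - c) ^ 2 := by
  rw [integral_sq_eq_variance_add_sq (X := fun ω ↦ X ω - c) (hX.sub (memLp_const c)),
    variance_sub_const hX.aestronglyMeasurable, integral_sub (hX.integrable one_le_two)
      (integrable_const c), integral_const]
  simp

lemma ProbabilityTheory.IndepFun.integral_sub_sq (h : IndepFun X Y μ) (hX : MemLp X 2 μ)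
    (hY : MemLp Y 2 μ) :
    ∫ ω, (X ω - Y ω) ^ 2 ∂μ = ∫ ω, (X ω - μ[Y]) ^ 2 ∂μ + Var[Y; μ] := by
  rw [integral_sq_eq_variance_add_sq (X := fun ω ↦ X ω - Y ω) (hX.sub hY),
    variance_fun_sub hX hY, h.covariance_eq_zero hX hY, integral_sub_const_sq hX,
    integral_sub (hX.integrable one_le_two) (hY.integrable one_le_two)]
  ring

end Moments

lemma Real.iInf_mul_add_of_nonneg {ι : Sort*} [Nonempty ι] {a : ℝ} (ha : 0 ≤ a) {f : ι → ℝ}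
    (hf : BddBelow (Set.range f)) (b : ℝ) :
    ⨅ i, (a * f i + b) = a * (⨅ i, f i) + b :=
  (Monotone.map_ciInf_of_continuousAt (f := fun t ↦ a * t + b) (by fun_prop)
    (fun _ _ h ↦ by dsimp only; gcongr) hf).symm

lemma integrable_ciInf {α ι : Type*} [Finite ι] {mα : MeasurableSpace α} {μ : Measure α}
    {f : ι → α → ℝ} (hf : ∀ i, Integrable (f i) μ) : Integrable (fun x ↦ ⨅ i, f i x) μ := by
  cases isEmpty_or_nonempty ι
  · simp
  have := Fintype.ofFinite ι
  have hinf : (fun x ↦ ⨅ i, f i x) = Finset.univ.inf' Finset.univ_nonempty f := by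
    funext x
    rw [← Finset.inf'_univ_eq_ciInf, Finset.inf'_apply]
  rw [hinf]
  exact Finset.inf'_induction (p := fun g ↦ Integrable g μ) _ _ (fun _ hg _ hh ↦ hg.inf hh)
    fun i _ ↦ hf i

lemma sq_sub_add_mul_sq_sub {l : ℝ} (hl : 1 + l ≠ 0) (x m u : ℝ) :
    (x - u) ^ 2 + l * (m - u) ^ 2
      = (1 + l) * (u - (x + l * m) / (1 + l)) ^ 2 + l / (1 + l) * (x - m) ^ 2 := by
  field_simp
  ring

theorem stmt_19 (Ω : Type*) [MeasureSpace Ω]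
    [IsProbabilityMeasure (ℙ : Measure Ω)]
    (X Y : Ω → ℝ)
    (hXY : IndepFun X Y ℙ)
    (hX : MemLp X 2 ℙ) (hY : MemLp Y 2 ℙ)
    (l : ℝ) (hl : 0 ≤ l)
    (n : ℕ) (hn : 1 ≤ n) (u : Fin n → ℝ)
    (W : Ω → ℝ) (hW : ∀ ω, W ω = (X ω + l * (∫ ω', Y ω')) / (1 + l)) :
    (∫ ω, ⨅ i, ((X ω - u i) ^ 2 + l * (∫ ω', (Y ω' - u i) ^ 2)))
      = (l * (∫ ω, (X ω - Y ω) ^ 2)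
            + l ^ 2 * ((∫ ω, (Y ω) ^ 2) - (∫ ω, Y ω) ^ 2)) / (1 + l)
        + (1 + l) * (∫ ω, ⨅ i, (u i - W ω) ^ 2) := by
  have hl' : 0 < 1 + l := by linarith
  have : Nonempty (Fin n) := Fin.pos_iff_nonempty.mp hn
  set m := ∫ ω, Y ω with hm
  set K : Ω → ℝ := fun ω ↦ l / (1 + l) * (X ω - m) ^ 2 + l * Var[Y; ℙ]
  have hpointwise : ∀ ω, ⨅ i, ((X ω - u i) ^ 2 + l * (∫ ω', (Y ω' - u i) ^ 2))
      = (1 + l) * (⨅ i, (u i - W ω) ^ 2) + K ω := by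
    intro ω
    rw [← Real.iInf_mul_add_of_nonneg hl'.le (Set.finite_range _).bddBelow]
    refine iInf_congr fun i ↦ ?_
    rw [integral_sub_const_sq hY, hW]
    linear_combination sq_sub_add_mul_sq_sub hl'.ne' (X ω) m (u i)
  have hW2 : MemLp W 2 ℙ := by
    rw [show W = fun ω ↦ (1 + l)⁻¹ * (X ω + l * m) from
      funext fun ω ↦ by rw [hW, div_eq_inv_mul]]
    exact (hX.add (memLp_const _)).const_mul _
  have hdist : Integrable (fun ω ↦ ⨅ i, (u i - W ω) ^ 2) ℙ :=
    integrable_ciInf fun i ↦ ((memLp_const (u i)).sub hW2).integrable_sq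
  have hXm : Integrable (fun ω ↦ (X ω - m) ^ 2) ℙ := (hX.sub (memLp_const m)).integrable_sq
  have hKint : Integrable K ℙ := (hXm.const_mul _).add (integrable_const _)
  have hK : ∫ ω, K ω = l / (1 + l) * (∫ ω, (X ω - m) ^ 2) + l * Var[Y; ℙ] := by
    rw [integral_add (hXm.const_mul _) (integrable_const _), integral_const_mul]
    simp
  rw [integral_congr_ae (.of_forall hpointwise),
    integral_add (hdist.const_mul _) hKint,
    integral_const_mul, hK, hXY.integral_sub_sq hX hY, integral_sq_eq_variance_add_sq hY, ← hm]
  field_simp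
  ring
end
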